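/- arXiv:2203.07711 — 3 statements merged into one kernel-verified Lean document; each statement's English description precedes it below -/
import Mathlib

section
/- Let f : 2^𝒮 → ℝ be a non-negative submodular function with multilinear extension F. Let θ ∈ [0,1] and let x ∈ [0,1]^𝒮 satisfy x(s) ≤ θ for every s ∈ 𝒮. Then for every subset T ⊆ 𝒮, F(x ∨ 1_T) ≥ (1 − θ)·f(T). -/
open Finset

/-- The multilinear extension of a set function `f` on a finite ground set. -/
noncomputable def multilinearExt {S : Type*} [Fintype S] [DecidableEq S]
    (f : Finset S → ℝ) (x : S → ℝ) : ℝ :=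
  ∑ A : Finset S, f A * (∏ s ∈ A, x s) * ∏ s ∈ Aᶜ, (1 - x s)

/-- The 0/1 indicator vector of a subset `A`. -/
def indVec {S : Type*} [DecidableEq S] (A : Finset S) : S → ℝ :=
  fun s => if s ∈ A then 1 else 0

/-- Submodularity of a set function. -/
def Submodular {S : Type*} [DecidableEq S] (f : Finset S → ℝ) : Prop :=
  ∀ A B : Finset S, A ⊆ B → ∀ s, s ∉ B →
    f (insert s B) - f B ≤ f (insert s A) - f A

section AuxDev

set_option linter.unusedSectionVars false

variable {S : Type*} [Fintype S] [DecidableEq S]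

/-- The "restricted" multilinear extension: expectation of `f` over a random subset of `U`
where each element of `U` is included independently with probability `x s`. -/
noncomputable def Gset (f : Finset S → ℝ) (x : S → ℝ) (U : Finset S) : ℝ :=
  ∑ A ∈ U.powerset, f A * (∏ s ∈ A, x s) * ∏ s ∈ U \ A, (1 - x s)

lemma Gset_nonneg (f : Finset S → ℝ) (hf0 : ∀ A, 0 ≤ f A) (x : S → ℝ)
    (hx0 : ∀ s, 0 ≤ x s) (hx1 : ∀ s, x s ≤ 1) (U : Finset S) : 0 ≤ Gset f x U := by
  refine Finset.sum_nonneg fun A _ => ?_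
  have h1 : (0:ℝ) ≤ ∏ s ∈ A, x s := Finset.prod_nonneg fun s _ => hx0 s
  have h2 : (0:ℝ) ≤ ∏ s ∈ U \ A, (1 - x s) :=
    Finset.prod_nonneg fun s _ => by linarith [hx1 s]
  exact mul_nonneg (mul_nonneg (hf0 A) h1) h2

lemma Gset_weights (x : S → ℝ) (U : Finset S) :
    ∑ A ∈ U.powerset, (∏ s ∈ A, x s) * ∏ s ∈ U \ A, (1 - x s) = 1 := by
  rw [← Finset.prod_add]
  simp

lemma Gset_insert (f : Finset S → ℝ) (x : S → ℝ) (U : Finset S) (u : S) (hu : u ∉ U) :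
    Gset f x (insert u U) =
      (1 - x u) * Gset f x U + x u * Gset (fun B => f (insert u B)) x U := by
  unfold Gset
  rw [Finset.sum_powerset_insert hu, Finset.mul_sum, Finset.mul_sum]
  congr 1
  · refine Finset.sum_congr rfl fun A hA => ?_
    rw [Finset.mem_powerset] at hA
    have huA : u ∉ A := fun h => hu (hA h)
    have h1 : insert u U \ A = insert u (U \ A) := by
      ext s; simp only [Finset.mem_sdiff, Finset.mem_insert]
      constructor
      · rintro ⟨h | h, h2⟩ <;> simp [*]
      · rintro (rfl | ⟨h, h2⟩) <;> simp [*, huA]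
    rw [h1, Finset.prod_insert (by simp [hu])]
    ring
  · refine Finset.sum_congr rfl fun A hA => ?_
    rw [Finset.mem_powerset] at hA
    have huA : u ∉ A := fun h => hu (hA h)
    have h1 : insert u U \ insert u A = U \ A := by
      ext s; simp only [Finset.mem_sdiff, Finset.mem_insert]
      constructor
      · rintro ⟨h | h, h2⟩
        · exact absurd (Or.inl h) h2
        · exact ⟨h, fun h3 => h2 (Or.inr h3)⟩
      · rintro ⟨h, h2⟩
        exact ⟨Or.inr h, by rintro (rfl | h3) <;> [exact hu h; exact h2 h3]⟩
    rw [h1, Finset.prod_insert huA]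
    ring

lemma submodular_insert {f : Finset S → ℝ} (hf : Submodular f) (u : S) :
    Submodular (fun B => f (insert u B)) := by
  intro A B hAB s hs
  by_cases hsu : s = u
  · subst hsu; simp [Finset.insert_idem]
  · have h1 : insert s (insert u B) = insert u (insert s B) := Finset.insert_comm _ _ _
    have h2 : insert s (insert u A) = insert u (insert s A) := Finset.insert_comm _ _ _
    simp only []
    show f (insert u (insert s B)) - f (insert u B) ≤ f (insert u (insert s A)) - f (insert u A)
    rw [← h1, ← h2]
    exact hf (insert u A) (insert u B) (Finset.insert_subset_insert _ hAB) s
      (by simp [hs, hsu])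

lemma Gset_marginal_le {f : Finset S → ℝ} (hf : Submodular f) (x : S → ℝ)
    (hx0 : ∀ s, 0 ≤ x s) (hx1 : ∀ s, x s ≤ 1) (U : Finset S) (u : S) (hu : u ∉ U) :
    Gset (fun B => f (insert u B)) x U - Gset f x U ≤ f {u} - f ∅ := by
  unfold Gset
  rw [← Finset.sum_sub_distrib]
  have key : ∀ A ∈ U.powerset,
      f (insert u A) * (∏ s ∈ A, x s) * ∏ s ∈ U \ A, (1 - x s) -
        f A * (∏ s ∈ A, x s) * ∏ s ∈ U \ A, (1 - x s) ≤
      (f {u} - f ∅) * ((∏ s ∈ A, x s) * ∏ s ∈ U \ A, (1 - x s)) := by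
    intro A hA
    rw [Finset.mem_powerset] at hA
    have huA : u ∉ A := fun h => hu (hA h)
    have hsub : f (insert u A) - f A ≤ f {u} - f ∅ := by
      have := hf ∅ A (Finset.empty_subset _) u huA
      simpa using this
    have hw : (0:ℝ) ≤ (∏ s ∈ A, x s) * ∏ s ∈ U \ A, (1 - x s) := by
      have h1 : (0:ℝ) ≤ ∏ s ∈ A, x s := Finset.prod_nonneg fun s _ => hx0 s
      have h2 : (0:ℝ) ≤ ∏ s ∈ U \ A, (1 - x s) :=
        Finset.prod_nonneg fun s _ => by linarith [hx1 s]
      positivity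
    nlinarith [mul_le_mul_of_nonneg_right hsub hw]
  calc ∑ A ∈ U.powerset, (f (insert u A) * (∏ s ∈ A, x s) * ∏ s ∈ U \ A, (1 - x s) -
          f A * (∏ s ∈ A, x s) * ∏ s ∈ U \ A, (1 - x s))
      ≤ ∑ A ∈ U.powerset, (f {u} - f ∅) * ((∏ s ∈ A, x s) * ∏ s ∈ U \ A, (1 - x s)) :=
        Finset.sum_le_sum key
    _ = f {u} - f ∅ := by rw [← Finset.mul_sum, Gset_weights]; ring

/-- Key inductive inequality: for submodular nonnegative `f` and `0 ≤ x ≤ θ`,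
`G(f, x, U) ≥ (1 − θ)·f(∅) + θ·G(f, x/θ, U)`. -/
lemma Gset_key (θ : ℝ) (hθ0 : 0 < θ) (hθ1 : θ ≤ 1) (U : Finset S) :
    ∀ (f : Finset S → ℝ), Submodular f → (∀ A, 0 ≤ f A) →
    ∀ (x : S → ℝ), (∀ s, 0 ≤ x s) → (∀ s, x s ≤ θ) →
    (1 - θ) * f ∅ + θ * Gset f (fun s => x s / θ) U ≤ Gset f x U := by
  induction U using Finset.induction_on with
  | empty =>
    intro f hf hf0 x hx0 hxθ
    simp only [Gset, Finset.powerset_empty, Finset.sum_singleton, Finset.prod_empty,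
      Finset.empty_sdiff]
    nlinarith [hf0 (∅ : Finset S)]
  | @insert u U hu ih =>
    intro f hf hf0 x hx0 hxθ
    set g : Finset S → ℝ := fun B => f (insert u B) with hg
    have hgsub : Submodular g := submodular_insert hf u
    have hg0 : ∀ A, 0 ≤ g A := fun A => hf0 _
    have hx1 : ∀ s, x s ≤ 1 := fun s => le_trans (hxθ s) hθ1
    have hx'0 : ∀ s, 0 ≤ x s / θ := fun s => div_nonneg (hx0 s) hθ0.le
    have hx'1 : ∀ s, x s / θ ≤ 1 := fun s => (div_le_one hθ0).mpr (hxθ s)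
    have hP := ih f hf hf0 x hx0 hxθ
    have hQ := ih g hgsub hg0 x hx0 hxθ
    have hcomp := Gset_marginal_le hf (fun s => x s / θ) hx'0 hx'1 U u hu
    rw [Gset_insert f x U u hu, Gset_insert f (fun s => x s / θ) U u hu]
    set P := Gset f x U
    set Q := Gset g x U
    set P' := Gset f (fun s => x s / θ) U
    set Q' := Gset g (fun s => x s / θ) U
    have hgE : g ∅ = f {u} := by simp [hg]
    rw [hgE] at hQ
    have hrw : θ * ((1 - x u / θ) * P' + x u / θ * Q') = (θ - x u) * P' + x u * Q' := by
      field_simp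
    rw [hrw]
    have e1 : (1 - x u) * ((1 - θ) * f ∅ + θ * P') ≤ (1 - x u) * P :=
      mul_le_mul_of_nonneg_left hP (by linarith [hx1 u])
    have e2 : x u * ((1 - θ) * f {u} + θ * Q') ≤ x u * Q :=
      mul_le_mul_of_nonneg_left hQ (hx0 u)
    have e3 : 0 ≤ x u * ((1 - θ) * ((f {u} - f ∅) - (Q' - P'))) :=
      mul_nonneg (hx0 u) (mul_nonneg (by linarith) (by linarith))
    nlinarith [e1, e2, e3]

lemma Gset_ge (θ : ℝ) (hθ0 : 0 ≤ θ) (hθ1 : θ ≤ 1) (f : Finset S → ℝ)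
    (hf : Submodular f) (hf0 : ∀ A, 0 ≤ f A) (x : S → ℝ)
    (hx0 : ∀ s, 0 ≤ x s) (hxθ : ∀ s, x s ≤ θ) (U : Finset S) :
    (1 - θ) * f ∅ ≤ Gset f x U := by
  rcases eq_or_lt_of_le hθ0 with h0 | h0
  · have hx : ∀ s, x s = 0 := fun s => le_antisymm (h0 ▸ hxθ s) (hx0 s)
    have hG : Gset f x U = f ∅ := by
      unfold Gset
      rw [Finset.sum_eq_single_of_mem ∅ (by simp)]
      · simp [hx]
      · intro A hA hne
        obtain ⟨s, hs⟩ := Finset.nonempty_iff_ne_empty.mpr hne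
        rw [Finset.prod_eq_zero hs (hx s)]
        ring
    rw [hG, ← h0]
    simp
  · have hkey := Gset_key θ h0 hθ1 U f hf hf0 x hx0 hxθ
    have hnn : 0 ≤ Gset f (fun s => x s / θ) U :=
      Gset_nonneg f hf0 _ (fun s => div_nonneg (hx0 s) h0.le)
        (fun s => (div_le_one h0).mpr (hxθ s)) U
    nlinarith

/-- Rewriting `F(x ∨ 1_T)` as the restricted extension of `B ↦ f(T ∪ B)` over `Tᶜ`. -/
lemma multilinearExt_join_eq (f : Finset S → ℝ) (x : S → ℝ)
    (hx : ∀ t, x t ∈ Set.Icc (0:ℝ) 1) (T : Finset S) :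
    multilinearExt f (fun t => max (x t) (indVec T t)) = Gset (fun B => f (T ∪ B)) x Tᶜ := by
  have hx0 : ∀ s, 0 ≤ x s := fun s => (hx s).1
  have hx1 : ∀ s, x s ≤ 1 := fun s => (hx s).2
  set y : S → ℝ := fun t => max (x t) (indVec T t) with hy
  have hyT : ∀ s, s ∈ T → y s = 1 := by
    intro s hs; simp [hy, indVec, hs, max_eq_right (hx1 s)]
  have hyN : ∀ s, s ∉ T → y s = x s := by
    intro s hs; simp [hy, indVec, hs, max_eq_left (hx0 s)]
  unfold multilinearExt
  rw [← Finset.sum_filter_of_ne (p := fun A => T ⊆ A)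
      (by
        intro A _ hne
        by_contra hTA
        apply hne
        obtain ⟨s, hsT, hsA⟩ := Finset.not_subset.mp hTA
        have : (1 : ℝ) - y s = 0 := by rw [hyT s hsT]; ring
        rw [Finset.prod_eq_zero (Finset.mem_compl.mpr hsA) this]
        ring)]
  refine Finset.sum_bij' (fun A _ => A \ T) (fun B _ => T ∪ B) ?_ ?_ ?_ ?_ ?_
  · intro A hA
    simp only [Finset.mem_powerset]
    intro s hs
    simp only [Finset.mem_sdiff] at hs
    simp [hs.2]
  · intro B hB
    rw [Finset.mem_powerset] at hB
    simp only [Finset.mem_filter, Finset.mem_univ, true_and]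
    exact Finset.subset_union_left
  · intro A hA
    simp only [Finset.mem_filter, Finset.mem_univ, true_and] at hA
    exact Finset.union_sdiff_of_subset hA
  · intro B hB
    rw [Finset.mem_powerset] at hB
    ext s
    simp only [Finset.mem_sdiff, Finset.mem_union]
    constructor
    · rintro ⟨h | h, h2⟩; · exact absurd h h2
      exact h
    · intro h
      exact ⟨Or.inr h, fun h2 => (Finset.mem_compl.mp (hB h)) h2⟩
  · intro A hA
    simp only [Finset.mem_filter, Finset.mem_univ, true_and] at hA
    have hAB : A = T ∪ (A \ T) := (Finset.union_sdiff_of_subset hA).symm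
    have hdisj : Disjoint T (A \ T) := Finset.disjoint_sdiff
    have h1 : ∏ s ∈ A, y s = ∏ s ∈ A \ T, x s := by
      conv_lhs => rw [hAB]
      rw [Finset.prod_union hdisj, Finset.prod_congr rfl hyT, Finset.prod_const_one, one_mul]
      exact Finset.prod_congr rfl fun s hs => hyN s (Finset.mem_sdiff.mp hs).2
    have h2 : Aᶜ = Tᶜ \ (A \ T) := by
      ext s
      simp only [Finset.mem_compl, Finset.mem_sdiff]
      constructor
      · intro h; exact ⟨fun hT => h (hA hT), fun hc => h hc.1⟩
      · rintro ⟨hs1, hs2⟩ hsA; exact hs2 ⟨hsA, hs1⟩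
    have h3 : ∏ s ∈ Aᶜ, (1 - y s) = ∏ s ∈ Tᶜ \ (A \ T), (1 - x s) := by
      rw [h2]
      refine Finset.prod_congr rfl fun s hs => ?_
      rw [hyN s (Finset.mem_compl.mp (Finset.mem_sdiff.mp hs).1)]
    rw [h1, h3]
    simp only []
    rw [Finset.union_sdiff_of_subset hA]

end AuxDev

/-- Lemma 4: if every coordinate of `x` is at most `θ`, then for every set `T`,
`F(x ∨ 1_T) ≥ (1 − θ)·f(T)`. -/
theorem multilinearExt_join_lower_bound {S : Type*} [Fintype S] [DecidableEq S]
    (f : Finset S → ℝ) (hf : Submodular f) (hf0 : ∀ A : Finset S, 0 ≤ f A)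
    (θ : ℝ) (hθ : θ ∈ Set.Icc (0 : ℝ) 1)
    (x : S → ℝ) (hx : ∀ t, x t ∈ Set.Icc (0 : ℝ) 1) (hxθ : ∀ s, x s ≤ θ)
    (T : Finset S) :
    multilinearExt f (fun t => max (x t) (indVec T t)) ≥ (1 - θ) * f T := by
  set g : Finset S → ℝ := fun B => f (T ∪ B) with hg
  have hgsub : Submodular g := by
    intro A B hAB s hs
    by_cases hsT : s ∈ T
    · have h1 : ∀ C : Finset S, T ∪ insert s C = T ∪ C := by
        intro C
        rw [Finset.union_insert, Finset.insert_eq_self.mpr (Finset.mem_union_left C hsT)]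
      simp only [hg, h1]
      linarith
    · have h1 : ∀ C : Finset S, T ∪ insert s C = insert s (T ∪ C) := fun C =>
        Finset.union_insert s T C
      simp only [hg, h1]
      exact hf (T ∪ A) (T ∪ B) (Finset.union_subset_union_right hAB) s
        (by simp [hs, hsT])
  have hg0 : ∀ A, 0 ≤ g A := fun A => hf0 _
  have hgE : g ∅ = f T := by simp [hg]
  rw [ge_iff_le, multilinearExt_join_eq f x hx T, ← hgE]
  exact Gset_ge θ hθ.1 hθ.2 g hgsub hg0 x (fun s => (hx s).1) hxθ Tᶜ
end

section
/- Let f : 2^𝒮 → ℝ be a submodular function with multilinear extension F. Then for every x ∈ [0,1]^𝒮 and every subset O ⊆ 𝒮, Σ_{o∈O} (F(x ∨ 1_{{o}}) − F(x)) ≥ F(x ∨ 1_O) − F(x). -/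
open Finset

section Aux
set_option linter.unusedSectionVars false
variable {S : Type*} [Fintype S] [DecidableEq S]

private lemma sum_split' (t : Finset S → ℝ) (o : S) :
    ∑ A : Finset S, t A
      = ∑ A ∈ univ.filter (fun A : Finset S => o ∉ A), (t A + t (insert o A)) := by
  have key : ∑ A ∈ univ.filter (fun A : Finset S => o ∈ A), t A
      = ∑ A ∈ univ.filter (fun A : Finset S => o ∉ A), t (insert o A) := by
    refine Finset.sum_nbij' (fun A => A.erase o) (fun A => insert o A)
      (fun A hA => ?_) (fun A hA => ?_) (fun A hA => ?_) (fun A hA => ?_) (fun A hA => ?_)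
    · simp
    · simp
    · simp only [Finset.mem_filter, Finset.mem_univ, true_and] at hA
      exact Finset.insert_erase hA
    · simp only [Finset.mem_filter, Finset.mem_univ, true_and] at hA
      exact Finset.erase_insert hA
    · simp only [Finset.mem_filter, Finset.mem_univ, true_and] at hA
      rw [Finset.insert_erase hA]
  rw [← Finset.sum_filter_add_sum_filter_not univ (fun A : Finset S => o ∈ A), key,
    Finset.sum_add_distrib]
  ring

private lemma pin_one' (g : Finset S → ℝ) (x : S → ℝ) (o : S) :
    multilinearExt g (Function.update x o 1)
      = ∑ A : Finset S, g (insert o A) * (∏ s ∈ A, x s) * ∏ s ∈ Aᶜ, (1 - x s) := by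
  unfold multilinearExt
  rw [sum_split' (fun A => g A * (∏ s ∈ A, Function.update x o 1 s) *
      ∏ s ∈ Aᶜ, (1 - Function.update x o 1 s)) o,
    sum_split' (fun A => g (insert o A) * (∏ s ∈ A, x s) * ∏ s ∈ Aᶜ, (1 - x s)) o]
  apply Finset.sum_congr rfl
  intro B hB
  simp only [Finset.mem_filter, Finset.mem_univ, true_and] at hB
  have hBc : o ∈ Bᶜ := Finset.mem_compl.2 hB
  have h1 : (∏ s ∈ Bᶜ, (1 - Function.update x o 1 s)) = 0 := by
    apply Finset.prod_eq_zero hBc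
    simp
  have h2 : (∏ s ∈ B, Function.update x o 1 s) = ∏ s ∈ B, x s := by
    apply Finset.prod_congr rfl
    intro s hs
    have hso : s ≠ o := by rintro rfl; exact hB hs
    exact Function.update_of_ne hso 1 x
  have h3 : (∏ s ∈ insert o B, Function.update x o 1 s) = ∏ s ∈ B, x s := by
    rw [Finset.prod_insert hB, Function.update_self, one_mul, h2]
  have h4 : (∏ s ∈ (insert o B)ᶜ, (1 - Function.update x o 1 s))
      = ∏ s ∈ (insert o B)ᶜ, (1 - x s) := by
    apply Finset.prod_congr rfl
    intro s hs
    have hso : s ≠ o := by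
      rintro rfl; exact (Finset.mem_compl.1 hs) (Finset.mem_insert_self _ _)
    rw [Function.update_of_ne hso 1 x]
  have h5 : (∏ s ∈ Bᶜ, (1 - x s)) = (1 - x o) * ∏ s ∈ (insert o B)ᶜ, (1 - x s) := by
    have h := Finset.prod_insert (f := fun s => 1 - x s) (Finset.notMem_erase o Bᶜ)
    rw [Finset.insert_erase hBc] at h
    rw [Finset.compl_insert]
    exact h
  have h6 : (∏ s ∈ insert o B, x s) = x o * ∏ s ∈ B, x s := Finset.prod_insert hB
  simp only [h1, h2, h3, h4, h5, h6, Finset.insert_idem]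
  ring

private def pin' (O : Finset S) (x : S → ℝ) : S → ℝ := fun t => if t ∈ O then 1 else x t

private lemma pin'_insert (O : Finset S) (x : S → ℝ) (o : S) :
    pin' (insert o O) x = pin' O (Function.update x o 1) := by
  funext s
  by_cases hs : s ∈ O
  · simp [pin', hs, Finset.mem_insert]
  · by_cases hso : s = o
    · subst hso; simp [pin', hs]
    · simp only [pin', Finset.mem_insert, hs, hso, if_false, or_false,
        Function.update_of_ne hso 1 x]

private lemma pinned' (f : Finset S → ℝ) (O : Finset S) :
    ∀ x : S → ℝ, multilinearExt f (pin' O x)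
      = ∑ A : Finset S, f (A ∪ O) * (∏ s ∈ A, x s) * ∏ s ∈ Aᶜ, (1 - x s) := by
  induction O using Finset.induction_on with
  | empty =>
    intro x
    have : pin' (∅ : Finset S) x = x := by funext s; simp [pin']
    rw [this]
    simp [multilinearExt]
  | @insert o O' hnot ih =>
    intro x
    rw [pin'_insert, ih (Function.update x o 1)]
    have : (∑ A : Finset S, f (A ∪ O') * (∏ s ∈ A, Function.update x o 1 s) *
        ∏ s ∈ Aᶜ, (1 - Function.update x o 1 s))
        = multilinearExt (fun A => f (A ∪ O')) (Function.update x o 1) := rfl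
    rw [this, pin_one']
    apply Finset.sum_congr rfl
    intro A _
    congr 2
    rw [Finset.insert_union, ← Finset.union_insert]

private lemma submod_sum' (f : Finset S → ℝ) (hf : Submodular f) (A : Finset S)
    (O : Finset S) :
    f (A ∪ O) - f A ≤ ∑ o ∈ O, (f (insert o A) - f A) := by
  induction O using Finset.induction_on with
  | empty => simp
  | @insert o O' hnot ih =>
    rw [Finset.sum_insert hnot, Finset.union_insert]
    by_cases hoA : o ∈ A ∪ O'
    · rw [Finset.insert_eq_self.2 hoA]
      have h0 : 0 ≤ f (insert o A) - f A := by
        rcases Finset.mem_union.1 hoA with h | h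
        · rw [Finset.insert_eq_self.2 h]; simp
        · exact absurd h hnot
      linarith
    · have := hf A (A ∪ O') Finset.subset_union_left o hoA
      linarith

end Aux

/-- Submodularity of the multilinear extension over joins with singletons:
`Σ_{o∈O} (F(x ∨ 1_{{o}}) − F(x)) ≥ F(x ∨ 1_O) − F(x)`. -/
theorem multilinearExt_sum_singleton_joins {S : Type*} [Fintype S] [DecidableEq S]
    (f : Finset S → ℝ) (hf : Submodular f)
    (x : S → ℝ) (hx : ∀ t, x t ∈ Set.Icc (0 : ℝ) 1) (O : Finset S) :
    ∑ o ∈ O, (multilinearExt f (fun t => max (x t) (indVec ({o} : Finset S) t))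
        - multilinearExt f x)
      ≥ multilinearExt f (fun t => max (x t) (indVec O t)) - multilinearExt f x := by
  have hmax : ∀ P : Finset S, (fun t => max (x t) (indVec P t)) = pin' P x := by
    intro P
    funext t
    by_cases ht : t ∈ P
    · simp [pin', indVec, ht, max_eq_right (hx t).2]
    · simp [pin', indVec, ht, max_eq_left (hx t).1]
  have hx0 : multilinearExt f x
      = ∑ A : Finset S, f A * (∏ s ∈ A, x s) * ∏ s ∈ Aᶜ, (1 - x s) := rfl
  simp only [hmax, pinned', hx0]
  have hw : ∀ A : Finset S, 0 ≤ (∏ s ∈ A, x s) * ∏ s ∈ Aᶜ, (1 - x s) := by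
    intro A
    apply mul_nonneg
    · exact Finset.prod_nonneg fun s _ => (hx s).1
    · exact Finset.prod_nonneg fun s _ => by linarith [(hx s).2]
  calc (∑ A : Finset S, f (A ∪ O) * (∏ s ∈ A, x s) * ∏ s ∈ Aᶜ, (1 - x s))
        - ∑ A : Finset S, f A * (∏ s ∈ A, x s) * ∏ s ∈ Aᶜ, (1 - x s)
      = ∑ A : Finset S, (f (A ∪ O) - f A) * ((∏ s ∈ A, x s) * ∏ s ∈ Aᶜ, (1 - x s)) := by
        rw [← Finset.sum_sub_distrib]
        exact Finset.sum_congr rfl fun A _ => by ring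
    _ ≤ ∑ A : Finset S, (∑ o ∈ O, (f (insert o A) - f A)) *
          ((∏ s ∈ A, x s) * ∏ s ∈ Aᶜ, (1 - x s)) := by
        apply Finset.sum_le_sum
        intro A _
        exact mul_le_mul_of_nonneg_right (submod_sum' f hf A O) (hw A)
    _ = ∑ o ∈ O, ((∑ A : Finset S, f (A ∪ {o}) * (∏ s ∈ A, x s) * ∏ s ∈ Aᶜ, (1 - x s))
          - ∑ A : Finset S, f A * (∏ s ∈ A, x s) * ∏ s ∈ Aᶜ, (1 - x s)) := by
        simp only [Finset.sum_mul]
        rw [Finset.sum_comm]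
        apply Finset.sum_congr rfl
        intro o _
        rw [← Finset.sum_sub_distrib]
        apply Finset.sum_congr rfl
        intro A _
        have : A ∪ {o} = insert o A := by
          rw [Finset.union_comm, ← Finset.insert_eq]
        rw [this]
        ring
end

section
/- (Deterministic form of the per-step progress lemma, Lemma 6.) Let f : 2^𝒮 → ℝ be non-negative submodular with multilinear extension F, let ℓ : 𝒮 → ℝ be weights with linear extension L, and set τ = max_{s∈𝒮} f({s}). Let ε > 0, let 0 < δ ≤ ε/n² with δ ≤ 1, and let c ∈ (0,1]. Let x, z ∈ [0,1]^𝒮, set x′ = x + δ·(z ⊙ (1−x)) where ⊙ is the coordinatewise (Hadamard) product, and let w : 𝒮 → ℝ satisfy |w(s) − (F(x ∨ 1_{{s}}) − F(x ∧ 1_{𝒮∖{s}}))| ≤ 2ετ/n for every s ∈ 𝒮. Let O ⊆ 𝒮 satisfy Σ_{s∈𝒮} z(s)(1−x(s))·(c·w(s) + ℓ(s)) ≥ Σ_{o∈O} (1−x(o))·(c·w(o) + ℓ(o)). Then ((1+δ)·c·F(x′) + L(x′) − c·F(x) − L(x))/δ ≥ c·(F(x ∨ 1_O) + F(x′) − F(x))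 + Σ_{o∈O} ℓ(o)(1−x(o)) − 5ετ. -/
/-!
Along nonnegative directions the multilinear extension `F` of a submodular `f` is concave, and its
gradient `∂_v F = multilinearExt (marginal f v)` is antitone. Hence
`F (x ∨ 1_O) ≤ F x + ∑_{o ∈ O} (1 - x_o) ∂_o F x` and `F x + ⟨x' - x, ∇F x'⟩ ≤ F x'`, so the step
loses at most `∑_s (x'_s - x_s) (∂_s F x - ∂_s F x')` against the linearisation at `x`.
This loss is of second order: comparing the concavity bounds at `x` and at `x'` with coordinate `s`
raised to `1` turns `(1 - x_s) (∂_s F x - ∂_s F x')` into gradient drops weighted by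
`x'_v - x_v ≤ δ (1 - x_v)`, and `∑_v (1 - w_v) (τ - ∂_v F w) ≤ n τ` whenever `w_s = 1`, because
`0 ≤ F 1` and `F w ≤ τ ∑_v w_v`. The loss is therefore at most `2 δ² n² τ ≤ 2 δ ε τ`; the rest is
the choice of `z` against `O` and the accuracy `2 ε τ / n` of `w`.
-/

open Finset

open Function

section

variable {S : Type*}

section SetFunction

variable [DecidableEq S]

/-- `multilinearExt (marginal g u)` is the partial derivative in the coordinate `u` of the
multilinear extension of `g` (see `multilinearExt_update_eq_add`). -/
def marginal (g : Finset S → ℝ) (u : S) (A : Finset S) : ℝ :=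
  g (insert u A) - g (A.erase u)

lemma insert_erase_eq_insert (u : S) (A : Finset S) : insert u (A.erase u) = insert u A := by
  grind

lemma marginal_erase (g : Finset S → ℝ) (u : S) (A : Finset S) :
    marginal g u (A.erase u) = marginal g u A := by
  simp only [marginal, insert_erase_eq_insert, erase_idem]

lemma marginal_insert (g : Finset S → ℝ) (u : S) (A : Finset S) :
    marginal g u (insert u A) = marginal g u A := by
  simp only [marginal, insert_idem, erase_insert_eq_erase]

variable {f : Finset S → ℝ} {τ : ℝ}

lemma Submodular.marginal_antitone (hf : Submodular f) (v : S) : Antitone (marginal f v) := by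
  intro A B hAB
  have h := hf (A.erase v) (B.erase v) (erase_subset_erase v hAB) v (notMem_erase v B)
  simpa only [marginal, insert_erase_eq_insert] using h

lemma Submodular.insert_sub_le (hf : Submodular f) (hf0 : ∀ A, 0 ≤ f A)
    (hτ : ∀ s, f {s} ≤ τ) {a : S} {B : Finset S} (ha : a ∉ B) :
    f (insert a B) - f B ≤ τ := by
  have h := hf ∅ B (empty_subset B) a ha
  rw [insert_empty] at h
  linarith [hf0 ∅, hτ a]

lemma Submodular.marginal_le (hf : Submodular f) (hf0 : ∀ A, 0 ≤ f A)
    (hτ : ∀ s, f {s} ≤ τ) (v : S) (A : Finset S) : marginal f v A ≤ τ := by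
  rw [marginal, ← insert_erase_eq_insert]
  exact hf.insert_sub_le hf0 hτ (notMem_erase v A)

lemma Submodular.le_add_card_mul (hf : Submodular f) (hf0 : ∀ A, 0 ≤ f A)
    (hτ : ∀ s, f {s} ≤ τ) (B : Finset S) : f B ≤ f ∅ + #B * τ := by
  induction B using Finset.induction_on with
  | empty => simp
  | insert a B ha ih =>
    rw [card_insert_of_notMem ha, Nat.cast_succ]
    linarith [hf.insert_sub_le hf0 hτ ha]

lemma Submodular.marginal_empty_sub_marginal_univ_le [Fintype S] (hf : Submodular f)
    (hf0 : ∀ A, 0 ≤ f A) (hτ : ∀ s, f {s} ≤ τ) (v : S) :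
    marginal f v ∅ - marginal f v univ ≤ Fintype.card S * τ := by
  have hcard := hf.le_add_card_mul hf0 hτ (univ.erase v)
  rw [cast_card_erase_of_mem (mem_univ v), card_univ] at hcard
  simp only [marginal, insert_empty, erase_empty, insert_eq_of_mem (mem_univ v)]
  linarith [hτ v, hf0 univ]

end SetFunction

section Cube

lemma mem_Icc_apply {y : S → ℝ} (hy : y ∈ Set.Icc 0 1) (t : S) : y t ∈ Set.Icc (0 : ℝ) 1 :=
  ⟨hy.1 t, hy.2 t⟩

variable [DecidableEq S] {a b y : S → ℝ}

lemma indVec_mem_Icc (B : Finset S) : indVec B ∈ Set.Icc 0 1 :=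
  ⟨fun t => by unfold indVec; split_ifs <;> norm_num,
   fun t => by unfold indVec; split_ifs <;> norm_num⟩

lemma piecewise_mem_Icc_of_mem (ha : a ∈ Set.Icc 0 1) (hb : b ∈ Set.Icc 0 1) (T : Finset S) :
    T.piecewise b a ∈ Set.Icc 0 1 :=
  ⟨le_piecewise_of_le_of_le T hb.1 ha.1, piecewise_le_of_le_of_le T hb.2 ha.2⟩

lemma update_mem_Icc_of_mem (hy : y ∈ Set.Icc 0 1) (u : S) {r : ℝ} (hr : r ∈ Set.Icc 0 1) :
    update y u r ∈ Set.Icc 0 1 :=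
  ⟨le_update_iff.2 ⟨hr.1, fun j _ => hy.1 j⟩, update_le_iff.2 ⟨hr.2, fun j _ => hy.2 j⟩⟩

lemma max_indVec_eq_piecewise (hy : y ∈ Set.Icc 0 1) (O : Finset S) :
    (fun t => max (y t) (indVec O t)) = O.piecewise (1 : S → ℝ) y := by
  ext t
  by_cases ht : t ∈ O
  · simpa [indVec, ht] using hy.2 t
  · simpa [indVec, ht] using hy.1 t

lemma min_indVec_compl_eq_piecewise [Fintype S] (hy : y ∈ Set.Icc 0 1) (O : Finset S) :
    (fun t => min (y t) (indVec Oᶜ t)) = O.piecewise (0 : S → ℝ) y := by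
  ext t
  by_cases ht : t ∈ O
  · simpa [indVec, ht] using hy.1 t
  · simpa [indVec, ht] using hy.2 t

end Cube

section Multilinear

variable [Fintype S] [DecidableEq S]

def multilinearWeight (y : S → ℝ) (A : Finset S) : ℝ :=
  (∏ s ∈ A, y s) * ∏ s ∈ Aᶜ, (1 - y s)

lemma multilinearExt_eq_sum (g : Finset S → ℝ) (y : S → ℝ) :
    multilinearExt g y = ∑ A, g A * multilinearWeight y A := by
  simp only [multilinearExt, multilinearWeight, mul_assoc]

lemma multilinearWeight_nonneg {y : S → ℝ} (hy : y ∈ Set.Icc 0 1) (A : Finset S) :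
    0 ≤ multilinearWeight y A :=
  mul_nonneg (prod_nonneg fun s _ => hy.1 s) (prod_nonneg fun s _ => sub_nonneg.2 (hy.2 s))

lemma sum_multilinearWeight (y : S → ℝ) : ∑ A, multilinearWeight y A = 1 := by
  have h := (prod_add y (fun s => 1 - y s) univ).symm
  simp only [add_sub_cancel, prod_const_one, powerset_univ, ← compl_eq_univ_sdiff] at h
  exact h

lemma multilinearExt_sub (g h : Finset S → ℝ) (y : S → ℝ) :
    multilinearExt (fun A => g A - h A) y = multilinearExt g y - multilinearExt h y := by
  simp only [multilinearExt_eq_sum, sub_mul, sum_sub_distrib]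

lemma multilinearExt_const (C : ℝ) (y : S → ℝ) : multilinearExt (fun _ => C) y = C := by
  rw [multilinearExt_eq_sum, ← mul_sum, sum_multilinearWeight, mul_one]

lemma multilinearExt_mono {y : S → ℝ} (hy : y ∈ Set.Icc 0 1) {g h : Finset S → ℝ}
    (hgh : g ≤ h) : multilinearExt g y ≤ multilinearExt h y := by
  simp only [multilinearExt_eq_sum]
  exact sum_le_sum fun A _ => mul_le_mul_of_nonneg_right (hgh A) (multilinearWeight_nonneg hy A)

lemma multilinearExt_le_of_le {y : S → ℝ} (hy : y ∈ Set.Icc 0 1) {g : Finset S → ℝ} {C : ℝ}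
    (hg : ∀ A, g A ≤ C) : multilinearExt g y ≤ C :=
  (multilinearExt_mono hy hg).trans_eq (multilinearExt_const C y)

lemma le_multilinearExt_of_le {y : S → ℝ} (hy : y ∈ Set.Icc 0 1) {g : Finset S → ℝ} {C : ℝ}
    (hg : ∀ A, C ≤ g A) : C ≤ multilinearExt g y :=
  (multilinearExt_const C y).symm.trans_le (multilinearExt_mono hy hg)

lemma multilinearExt_indVec (g : Finset S → ℝ) (B : Finset S) :
    multilinearExt g (indVec B) = g B := by
  rw [multilinearExt_eq_sum, sum_eq_single B]
  · rw [multilinearWeight, prod_eq_one (f := indVec B) fun s hs => if_pos hs,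
      prod_eq_one fun s hs => by rw [indVec, if_neg (mem_compl.1 hs), sub_zero], mul_one, mul_one]
  · intro A _ hAB
    by_cases h : A ⊆ B
    · obtain ⟨s, hsB, hsA⟩ := not_subset.1 fun h' => hAB (Subset.antisymm h h')
      rw [multilinearWeight, prod_eq_zero (mem_compl.2 hsA) (by simp [indVec, hsB]),
        mul_zero, mul_zero]
    · obtain ⟨s, hsA, hsB⟩ := not_subset.1 h
      rw [multilinearWeight, prod_eq_zero hsA (by simp [indVec, hsB]), zero_mul, mul_zero]
  · simp

lemma multilinearExt_eq_sum_powerset_erase (g : Finset S → ℝ) (y : S → ℝ) (u : S) :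
    multilinearExt g y = ∑ t ∈ (univ.erase u).powerset,
      ((1 - y u) * g t + y u * g (insert u t))
        * ((∏ s ∈ t, y s) * ∏ s ∈ tᶜ.erase u, (1 - y s)) := by
  rw [multilinearExt_eq_sum, ← powerset_univ, ← insert_erase (mem_univ u),
    sum_powerset_insert (notMem_erase u univ), ← sum_add_distrib, insert_erase (mem_univ u)]
  refine sum_congr rfl fun t ht => ?_
  have hut : u ∉ t := fun h => notMem_erase u univ (mem_powerset.1 ht h)
  rw [multilinearWeight, multilinearWeight, prod_insert hut, compl_insert,
    ← mul_prod_erase tᶜ (fun s => 1 - y s) (mem_compl.2 hut)]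
  ring

lemma multilinearExt_update (g : Finset S → ℝ) (y : S → ℝ) (u : S) (r : ℝ) :
    multilinearExt g (update y u r)
      = (1 - r) * multilinearExt (fun A => g (A.erase u)) y
        + r * multilinearExt (fun A => g (insert u A)) y := by
  rw [multilinearExt_eq_sum_powerset_erase g _ u, multilinearExt_eq_sum_powerset_erase _ y u,
    multilinearExt_eq_sum_powerset_erase _ y u, mul_sum, mul_sum, ← sum_add_distrib]
  refine sum_congr rfl fun t ht => ?_
  have hut : u ∉ t := fun h => notMem_erase u univ (mem_powerset.1 ht h)
  have h1 : ∏ s ∈ t, update y u r s = ∏ s ∈ t, y s :=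
    prod_congr rfl fun s hs => update_of_ne (ne_of_mem_of_not_mem hs hut) r y
  have h2 : ∏ s ∈ tᶜ.erase u, (1 - update y u r s) = ∏ s ∈ tᶜ.erase u, (1 - y s) :=
    prod_congr rfl fun s hs => by rw [update_of_ne (ne_of_mem_erase hs)]
  rw [h1, h2, update_self, erase_eq_of_notMem hut, erase_insert hut, insert_idem]
  ring

lemma multilinearExt_update_eq_add (g : Finset S → ℝ) (y : S → ℝ) (u : S) (r : ℝ) :
    multilinearExt g (update y u r)
      = multilinearExt g y + (r - y u) * multilinearExt (marginal g u) y := by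
  have hy := multilinearExt_update g y u (y u)
  rw [update_eq_self] at hy
  rw [multilinearExt_update, hy]
  have hmarg := multilinearExt_sub (fun A => g (insert u A)) (fun A => g (A.erase u)) y
  rw [show marginal g u = fun A => g (insert u A) - g (A.erase u) from rfl, hmarg]
  ring

lemma multilinearExt_marginal_update (g : Finset S → ℝ) (y : S → ℝ) (u : S) (r : ℝ) :
    multilinearExt (marginal g u) (update y u r) = multilinearExt (marginal g u) y := by
  simp only [multilinearExt_update, marginal_erase, marginal_insert]
  ring

lemma multilinearExt_update_one_sub_update_zero (g : Finset S → ℝ) (y : S → ℝ) (u : S) :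
    multilinearExt g (update y u 1) - multilinearExt g (update y u 0)
      = multilinearExt (marginal g u) y := by
  rw [multilinearExt_update_eq_add, multilinearExt_update_eq_add]
  ring

lemma multilinearExt_max_indVec_sub_min_indVec (g : Finset S → ℝ) {y : S → ℝ}
    (hy : y ∈ Set.Icc 0 1) (s : S) :
    multilinearExt g (fun t => max (y t) (indVec {s} t))
      - multilinearExt g (fun t => min (y t) (indVec {s}ᶜ t))
      = multilinearExt (marginal g s) y := by
  rw [max_indVec_eq_piecewise hy, min_indVec_compl_eq_piecewise hy, piecewise_singleton,
    piecewise_singleton]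
  exact multilinearExt_update_one_sub_update_zero g y s

end Multilinear


section Multilinear

variable [Fintype S] [DecidableEq S]

lemma multilinearExt_antitoneOn {g : Finset S → ℝ} (hg : Antitone g) :
    AntitoneOn (multilinearExt g) (Set.Icc 0 1) := by
  intro a ha b hb hab
  suffices ∀ T : Finset S, multilinearExt g (T.piecewise b a) ≤ multilinearExt g a by
    simpa using this univ
  intro T
  induction T using Finset.induction_on with
  | empty => simp
  | insert u T hu ih =>
    have hsecond : multilinearExt (marginal g u) (T.piecewise b a) ≤ 0 :=
      multilinearExt_le_of_le (piecewise_mem_Icc_of_mem ha hb T) fun A =>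
        sub_nonpos.2 (hg ((erase_subset u A).trans (subset_insert u A)))
    rw [piecewise_insert, multilinearExt_update_eq_add, piecewise_eq_of_notMem _ _ _ hu]
    linarith [mul_nonpos_of_nonneg_of_nonpos (sub_nonneg.2 (hab u)) hsecond]

variable {f : Finset S → ℝ} {τ : ℝ} {a b : S → ℝ}

lemma Submodular.multilinearExt_piecewise_le (hf : Submodular f) (ha : a ∈ Set.Icc 0 1)
    (hb : b ∈ Set.Icc 0 1) (hab : a ≤ b) (T : Finset S) :
    multilinearExt f (T.piecewise b a)
      ≤ multilinearExt f a + ∑ v ∈ T, (b v - a v) * multilinearExt (marginal f v) a := by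
  induction T using Finset.induction_on with
  | empty => simp
  | insert u T hu ih =>
    have hdrop := multilinearExt_antitoneOn (hf.marginal_antitone u) ha
      (piecewise_mem_Icc_of_mem ha hb T) (le_piecewise_of_le_of_le T hab le_rfl)
    rw [piecewise_insert, multilinearExt_update_eq_add, piecewise_eq_of_notMem _ _ _ hu,
      sum_insert hu]
    linarith [mul_le_mul_of_nonneg_left hdrop (sub_nonneg.2 (hab u))]

lemma Submodular.add_sum_le_multilinearExt_piecewise (hf : Submodular f)
    (ha : a ∈ Set.Icc 0 1) (hb : b ∈ Set.Icc 0 1) (hab : a ≤ b) (T : Finset S) :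
    multilinearExt f a + ∑ v ∈ T, (b v - a v) * multilinearExt (marginal f v) b
      ≤ multilinearExt f (T.piecewise b a) := by
  induction T using Finset.induction_on with
  | empty => simp
  | insert u T hu ih =>
    have hdrop := multilinearExt_antitoneOn (hf.marginal_antitone u)
      (piecewise_mem_Icc_of_mem ha hb T) hb (piecewise_le_of_le_of_le T le_rfl hab)
    rw [piecewise_insert, multilinearExt_update_eq_add, piecewise_eq_of_notMem _ _ _ hu,
      sum_insert hu]
    linarith [mul_le_mul_of_nonneg_left hdrop (sub_nonneg.2 (hab u))]

lemma Submodular.multilinearExt_le_add_sum (hf : Submodular f) (ha : a ∈ Set.Icc 0 1)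
    (hb : b ∈ Set.Icc 0 1) (hab : a ≤ b) :
    multilinearExt f b
      ≤ multilinearExt f a + ∑ v, (b v - a v) * multilinearExt (marginal f v) a := by
  simpa using hf.multilinearExt_piecewise_le ha hb hab univ

lemma Submodular.add_sum_le_multilinearExt (hf : Submodular f) (ha : a ∈ Set.Icc 0 1)
    (hb : b ∈ Set.Icc 0 1) (hab : a ≤ b) :
    multilinearExt f a + ∑ v, (b v - a v) * multilinearExt (marginal f v) b
      ≤ multilinearExt f b := by
  simpa using hf.add_sum_le_multilinearExt_piecewise ha hb hab univ

end Multilinear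

section Curvature

variable [Fintype S] [DecidableEq S] {f : Finset S → ℝ} {τ : ℝ}

lemma Submodular.multilinearExt_le_mul_sum (hf : Submodular f) (hf0 : ∀ A, 0 ≤ f A)
    (hτ : ∀ s, f {s} ≤ τ) {w : S → ℝ} (hw : w ∈ Set.Icc 0 1) {s : S} (hws : w s = 1) :
    multilinearExt f w ≤ τ * ∑ v, w v := by
  have hs := indVec_mem_Icc {s}
  have hsw : indVec {s} ≤ w := fun v => by
    unfold indVec
    split_ifs with hv
    · rw [mem_singleton.1 hv, hws]
    · exact hw.1 v
  have hgrad : ∀ v, (w v - indVec {s} v) * multilinearExt (marginal f v) (indVec {s})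
      ≤ (w v - indVec {s} v) * τ := fun v =>
    mul_le_mul_of_nonneg_left (multilinearExt_le_of_le hs (hf.marginal_le hf0 hτ v))
      (sub_nonneg.2 (hsw v))
  have hsum : ∑ v, indVec {s} v = 1 := by simp [indVec]
  calc multilinearExt f w
      ≤ f {s} + ∑ v, (w v - indVec {s} v) * multilinearExt (marginal f v) (indVec {s}) := by
        simpa only [multilinearExt_indVec] using hf.multilinearExt_le_add_sum hs hw hsw
    _ ≤ τ + ∑ v, (w v - indVec {s} v) * τ := add_le_add (hτ s) (sum_le_sum fun v _ => hgrad v)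
    _ = τ * ∑ v, w v := by rw [← sum_mul, sum_sub_distrib, hsum]; ring

lemma Submodular.sum_one_sub_mul_sub_le (hf : Submodular f) (hf0 : ∀ A, 0 ≤ f A)
    (hτ : ∀ s, f {s} ≤ τ) {w : S → ℝ} (hw : w ∈ Set.Icc 0 1) {s : S} (hws : w s = 1) :
    ∑ v, (1 - w v) * (τ - multilinearExt (marginal f v) w) ≤ Fintype.card S * τ := by
  have h1 : (1 : S → ℝ) ∈ Set.Icc 0 1 := ⟨zero_le_one, le_rfl⟩
  have hupper := hf.multilinearExt_le_add_sum hw h1 hw.2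
  have hF1 : 0 ≤ multilinearExt f 1 := le_multilinearExt_of_le h1 hf0
  have hFw := hf.multilinearExt_le_mul_sum hf0 hτ hw hws
  have hcard : ∑ v, (1 - w v) = Fintype.card S - ∑ v, w v := by
    simp [sum_sub_distrib]
  simp only [Pi.one_apply] at hupper
  have hsplit : ∑ v, (1 - w v) * (τ - multilinearExt (marginal f v) w)
      = (∑ v, (1 - w v)) * τ - ∑ v, (1 - w v) * multilinearExt (marginal f v) w := by
    rw [sum_mul, ← sum_sub_distrib]
    exact sum_congr rfl fun v _ => by ring
  rw [hsplit, hcard]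
  linarith

/-- Both sides are differences `F (update · s 1) - F ·` at `x` and at `y`, compared by concavity
from `x` to `y` and from `update x s 1` to `update y s 1`. -/
lemma Submodular.one_sub_mul_marginal_sub_le (hf : Submodular f) {x y : S → ℝ}
    (hx : x ∈ Set.Icc 0 1) (hy : y ∈ Set.Icc 0 1) (hxy : x ≤ y) {s : S} (hys : y s = x s) :
    (1 - x s) * (multilinearExt (marginal f s) x - multilinearExt (marginal f s) y)
      ≤ ∑ v, (y v - x v) * (multilinearExt (marginal f v) x
          - multilinearExt (marginal f v) (update y s 1)) := by
  have h1 : (1 : ℝ) ∈ Set.Icc 0 1 := ⟨zero_le_one, le_rfl⟩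
  have hupper := hf.multilinearExt_le_add_sum hx hy hxy
  have hlower := hf.add_sum_le_multilinearExt (update_mem_Icc_of_mem hx s h1)
    (update_mem_Icc_of_mem hy s h1) (update_le_update_iff.2 ⟨le_rfl, fun j _ => hxy j⟩)
  have hdiff : ∀ v, update y s 1 v - update x s 1 v = y v - x v := fun v => by
    rcases eq_or_ne v s with rfl | hvs
    · simp [hys]
    · simp [update_of_ne hvs]
  simp only [hdiff] at hlower
  have hxs := multilinearExt_update_eq_add f x s 1
  have hys' := multilinearExt_update_eq_add f y s 1
  rw [hys] at hys'
  simp only [mul_sub, sum_sub_distrib]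
  linarith

/-- The factor `1 - δ` comes from `(1 - δ) (x'_v - x_v) ≤ δ (1 - x'_v)`, which brings the weights
into the form of `sum_one_sub_mul_sub_le` at `update x' s 1`. -/
lemma Submodular.one_sub_mul_marginal_sub_le_of_step (hf : Submodular f) (hf0 : ∀ A, 0 ≤ f A)
    (hτ : ∀ s, f {s} ≤ τ) {δ : ℝ} (hδ0 : 0 ≤ δ) (hδ1 : δ ≤ 1) {x x' : S → ℝ}
    (hx : x ∈ Set.Icc 0 1) (hx' : x' ∈ Set.Icc 0 1) (hxx' : x ≤ x')
    (hstep : ∀ t, x' t - x t ≤ δ * (1 - x t)) (s : S) :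
    (1 - δ) * ((1 - x s) * (multilinearExt (marginal f s) x
        - multilinearExt (marginal f s) x'))
      ≤ δ * (Fintype.card S * τ) := by
  have hxs := mem_Icc_apply hx s
  have h1 : (1 : ℝ) ∈ Set.Icc 0 1 := ⟨zero_le_one, le_rfl⟩
  set y := update x' s (x s) with hy_def
  set w := update x' s 1 with hw_def
  have hy : y ∈ Set.Icc 0 1 := update_mem_Icc_of_mem hx' s hxs
  have hw : w ∈ Set.Icc 0 1 := update_mem_Icc_of_mem hx' s h1
  have hxy : x ≤ y := le_update_iff.2 ⟨le_rfl, fun j _ => hxx' j⟩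
  have hcross := hf.one_sub_mul_marginal_sub_le hx hy hxy (update_self s (x s) x')
  rw [hy_def, multilinearExt_marginal_update, update_idem] at hcross
  have hterm : ∀ v, (1 - δ) * ((y v - x v) * (multilinearExt (marginal f v) x
      - multilinearExt (marginal f v) w))
      ≤ δ * ((1 - w v) * (τ - multilinearExt (marginal f v) w)) := by
    intro v
    rcases eq_or_ne v s with rfl | hvs
    · simp [hy_def, hw_def]
    · have hD : 0 ≤ multilinearExt (marginal f v) x - multilinearExt (marginal f v) w :=
        sub_nonneg.2 (multilinearExt_antitoneOn (hf.marginal_antitone v) hx hw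
          (le_update_iff.2 ⟨hx.2 s, fun j _ => hxx' j⟩))
      have hG : multilinearExt (marginal f v) x ≤ τ :=
        multilinearExt_le_of_le hx (hf.marginal_le hf0 hτ v)
      have hcoef : (1 - δ) * (x' v - x v) ≤ δ * (1 - x' v) := by linarith [hstep v]
      rw [hy_def, hw_def, update_of_ne hvs, update_of_ne hvs]
      calc (1 - δ) * ((x' v - x v) * (multilinearExt (marginal f v) x
            - multilinearExt (marginal f v) w))
          = ((1 - δ) * (x' v - x v)) * (multilinearExt (marginal f v) x
            - multilinearExt (marginal f v) w) := by ring
        _ ≤ (δ * (1 - x' v)) * (multilinearExt (marginal f v) x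
            - multilinearExt (marginal f v) w) := mul_le_mul_of_nonneg_right hcoef hD
        _ ≤ δ * ((1 - x' v) * (τ - multilinearExt (marginal f v) w)) := by
          rw [mul_assoc]
          exact mul_le_mul_of_nonneg_left (mul_le_mul_of_nonneg_left (by linarith)
            (sub_nonneg.2 (hx'.2 v))) hδ0
  calc (1 - δ) * ((1 - x s) * (multilinearExt (marginal f s) x
        - multilinearExt (marginal f s) x'))
      ≤ (1 - δ) * ∑ v, (y v - x v) * (multilinearExt (marginal f v) x
          - multilinearExt (marginal f v) w) := mul_le_mul_of_nonneg_left hcross (by linarith)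
    _ ≤ δ * ∑ v, (1 - w v) * (τ - multilinearExt (marginal f v) w) := by
      rw [mul_sum, mul_sum]; exact sum_le_sum fun v _ => hterm v
    _ ≤ δ * (Fintype.card S * τ) :=
      mul_le_mul_of_nonneg_left (hf.sum_one_sub_mul_sub_le hf0 hτ hw (update_self s 1 x')) hδ0

lemma Submodular.multilinearExt_marginal_sub_le (hf : Submodular f) (hf0 : ∀ A, 0 ≤ f A)
    (hτ : ∀ s, f {s} ≤ τ) {y y' : S → ℝ} (hy : y ∈ Set.Icc 0 1) (hy' : y' ∈ Set.Icc 0 1)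
    (v : S) :
    multilinearExt (marginal f v) y - multilinearExt (marginal f v) y'
      ≤ Fintype.card S * τ := by
  have hmax : multilinearExt (marginal f v) y ≤ marginal f v ∅ :=
    multilinearExt_le_of_le hy fun A => hf.marginal_antitone v (empty_subset A)
  have hmin : marginal f v univ ≤ multilinearExt (marginal f v) y' :=
    le_multilinearExt_of_le hy' fun A => hf.marginal_antitone v (subset_univ A)
  linarith [hf.marginal_empty_sub_marginal_univ_le hf0 hτ v]

lemma Submodular.one_sub_mul_marginal_sub_le_two_mul (hf : Submodular f)
    (hf0 : ∀ A, 0 ≤ f A) (hτ : ∀ s, f {s} ≤ τ) {δ : ℝ} (hδ0 : 0 ≤ δ) (hδ1 : δ ≤ 1)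
    {x x' : S → ℝ} (hx : x ∈ Set.Icc 0 1) (hx' : x' ∈ Set.Icc 0 1) (hxx' : x ≤ x')
    (hstep : ∀ t, x' t - x t ≤ δ * (1 - x t)) (s : S) :
    (1 - x s) * (multilinearExt (marginal f s) x - multilinearExt (marginal f s) x')
      ≤ 2 * δ * (Fintype.card S * τ) := by
  have hD : 0 ≤ multilinearExt (marginal f s) x - multilinearExt (marginal f s) x' :=
    sub_nonneg.2 (multilinearExt_antitoneOn (hf.marginal_antitone s) hx hx' hxx')
  have hxs := mem_Icc_apply hx s
  have hdrop := mul_nonneg (sub_nonneg.2 hxs.2) hD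
  -- for `δ > 1 / 2` the crude bound on the range of `∂_s F` is already good enough
  rcases le_or_gt δ (1 / 2) with hδ | hδ
  · linarith [hf.one_sub_mul_marginal_sub_le_of_step hf0 hτ hδ0 hδ1 hx hx' hxx' hstep s,
      mul_nonneg (by linarith : (0 : ℝ) ≤ 1 - 2 * δ) hdrop]
  · have hnτ : 0 ≤ Fintype.card S * τ := mul_nonneg (Nat.cast_nonneg _) ((hf0 {s}).trans (hτ s))
    have hcrude := hf.multilinearExt_marginal_sub_le hf0 hτ hx hx' s
    linarith [mul_nonneg hxs.1 hD, mul_nonneg (by linarith : (0 : ℝ) ≤ 2 * δ - 1) hnτ]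

lemma Submodular.multilinearExt_add_sum_sub_le (hf : Submodular f)
    (hf0 : ∀ A, 0 ≤ f A) (hτ : ∀ s, f {s} ≤ τ) {δ : ℝ} (hδ0 : 0 ≤ δ) (hδ1 : δ ≤ 1)
    {x x' : S → ℝ} (hx : x ∈ Set.Icc 0 1) (hx' : x' ∈ Set.Icc 0 1) (hxx' : x ≤ x')
    (hstep : ∀ t, x' t - x t ≤ δ * (1 - x t)) :
    multilinearExt f x + ∑ s, (x' s - x s) * multilinearExt (marginal f s) x
        - 2 * δ ^ 2 * Fintype.card S ^ 2 * τ
      ≤ multilinearExt f x' := by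
  have hlower := hf.add_sum_le_multilinearExt hx hx' hxx'
  have hterm : ∀ s, (x' s - x s) * (multilinearExt (marginal f s) x
      - multilinearExt (marginal f s) x') ≤ δ * (2 * δ * (Fintype.card S * τ)) := by
    intro s
    have hD : 0 ≤ multilinearExt (marginal f s) x - multilinearExt (marginal f s) x' :=
      sub_nonneg.2 (multilinearExt_antitoneOn (hf.marginal_antitone s) hx hx' hxx')
    calc (x' s - x s) * (multilinearExt (marginal f s) x - multilinearExt (marginal f s) x')
        ≤ δ * (1 - x s) * (multilinearExt (marginal f s) x
          - multilinearExt (marginal f s) x') := mul_le_mul_of_nonneg_right (hstep s) hD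
      _ ≤ δ * (2 * δ * (Fintype.card S * τ)) := by
        rw [mul_assoc]
        exact mul_le_mul_of_nonneg_left
          (hf.one_sub_mul_marginal_sub_le_two_mul hf0 hτ hδ0 hδ1 hx hx' hxx' hstep s) hδ0
  have hsum := sum_le_sum fun s (_ : s ∈ univ) => hterm s
  simp only [mul_sub, sum_sub_distrib, sum_const, card_univ, nsmul_eq_mul] at hsum
  linarith

lemma Submodular.multilinearExt_step_ge (hf : Submodular f) (hf0 : ∀ A, 0 ≤ f A)
    (hτ : ∀ s, f {s} ≤ τ) {δ : ℝ} (hδ0 : 0 ≤ δ) (hδ1 : δ ≤ 1) {x z : S → ℝ}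
    (hx : x ∈ Set.Icc 0 1) (hz : z ∈ Set.Icc 0 1) :
    multilinearExt f x + δ * ∑ s, z s * (1 - x s) * multilinearExt (marginal f s) x
        - 2 * δ ^ 2 * Fintype.card S ^ 2 * τ
      ≤ multilinearExt f (fun t => x t + δ * (z t * (1 - x t))) := by
  set x' : S → ℝ := fun t => x t + δ * (z t * (1 - x t))
  have hstep : ∀ t, x' t - x t ≤ δ * (1 - x t) := fun t => by
    simp only [x', add_sub_cancel_left]
    exact mul_le_mul_of_nonneg_left
      (mul_le_of_le_one_left (sub_nonneg.2 (hx.2 t)) (hz.2 t)) hδ0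
  have hxx' : x ≤ x' := fun t =>
    le_add_of_nonneg_right (mul_nonneg hδ0 (mul_nonneg (hz.1 t) (sub_nonneg.2 (hx.2 t))))
  have hx' : x' ∈ Set.Icc 0 1 :=
    ⟨hx.1.trans hxx', fun t => show x' t ≤ 1 by
      linarith [hstep t, mul_nonneg (sub_nonneg.2 hδ1) (sub_nonneg.2 (mem_Icc_apply hx t).2)]⟩
  have hdir : ∑ s, (x' s - x s) * multilinearExt (marginal f s) x
      = δ * ∑ s, z s * (1 - x s) * multilinearExt (marginal f s) x := by
    rw [mul_sum]
    exact sum_congr rfl fun s _ => by simp only [x']; ring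
  linarith [hf.multilinearExt_add_sum_sub_le hf0 hτ hδ0 hδ1 hx hx' hxx' hstep]

end Curvature

lemma abs_sum_mul_sub_sum_mul_sub_le [Fintype S] [DecidableEq S] {x z p q : S → ℝ}
    (hx : x ∈ Set.Icc 0 1) (hz : z ∈ Set.Icc 0 1) (O : Finset S) {η : ℝ}
    (hpq : ∀ s, |p s - q s| ≤ η) :
    |(∑ s, z s * (1 - x s) * p s - ∑ o ∈ O, (1 - x o) * p o)
      - (∑ s, z s * (1 - x s) * q s - ∑ o ∈ O, (1 - x o) * q o)| ≤ Fintype.card S * η := by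
  have hO : ∀ r : S → ℝ, ∑ o ∈ O, (1 - x o) * r o = ∑ s, indVec O s * (1 - x s) * r s :=
    fun r => by simp [indVec, ite_mul, sum_ite_mem]
  have hsum : (∑ s, z s * (1 - x s) * p s - ∑ o ∈ O, (1 - x o) * p o)
      - (∑ s, z s * (1 - x s) * q s - ∑ o ∈ O, (1 - x o) * q o)
      = ∑ s, (z s - indVec O s) * (1 - x s) * (p s - q s) := by
    simp only [hO, ← sum_sub_distrib]
    exact sum_congr rfl fun s _ => by ring
  rw [hsum]
  calc _ ≤ ∑ s, |(z s - indVec O s) * (1 - x s) * (p s - q s)| := abs_sum_le_sum_abs _ _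
    _ ≤ ∑ _s : S, η := sum_le_sum fun s _ => by
        have hcoef : |(z s - indVec O s) * (1 - x s)| ≤ 1 := by
          have hi := mem_Icc_apply (indVec_mem_Icc O) s
          have hxs := mem_Icc_apply hx s
          have hzs := mem_Icc_apply hz s
          rw [abs_le]
          constructor <;> nlinarith [hzs.1, hzs.2, hxs.1, hxs.2, hi.1, hi.2]
        rw [abs_mul]
        simpa using mul_le_mul hcoef (hpq s) (abs_nonneg _) zero_le_one
    _ = Fintype.card S * η := by simp

end

/-- Deterministic form of the per-step progress lemma (Lemma 6). -/
theorem per_step_progress {S : Type*} [Fintype S] [DecidableEq S] [Nonempty S]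
    (f : Finset S → ℝ) (hf : Submodular f) (hf0 : ∀ A : Finset S, 0 ≤ f A)
    (ℓ : S → ℝ)
    (τ : ℝ) (hτ : τ = Finset.univ.sup' Finset.univ_nonempty fun s => f {s})
    (ε : ℝ) (hε : 0 < ε)
    (δ : ℝ) (hδ0 : 0 < δ) (hδ1 : δ ≤ 1) (hδn : δ ≤ ε / (Fintype.card S : ℝ) ^ 2)
    (c : ℝ) (hc0 : 0 < c) (hc1 : c ≤ 1)
    (x z : S → ℝ) (hx : ∀ t, x t ∈ Set.Icc (0 : ℝ) 1) (hz : ∀ t, z t ∈ Set.Icc (0 : ℝ) 1)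
    (x' : S → ℝ) (hx' : x' = fun t => x t + δ * (z t * (1 - x t)))
    (w : S → ℝ)
    (hw : ∀ s : S, |w s - (multilinearExt f (fun t => max (x t) (indVec ({s} : Finset S) t))
        - multilinearExt f (fun t => min (x t) (indVec ({s}ᶜ : Finset S) t)))|
        ≤ 2 * ε * τ / (Fintype.card S : ℝ))
    (O : Finset S)
    (hO : ∑ s : S, z s * (1 - x s) * (c * w s + ℓ s)
        ≥ ∑ o ∈ O, (1 - x o) * (c * w o + ℓ o)) :
    ((1 + δ) * c * multilinearExt f x' + (∑ s : S, ℓ s * x' s)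
        - c * multilinearExt f x - (∑ s : S, ℓ s * x s)) / δ
      ≥ c * (multilinearExt f (fun t => max (x t) (indVec O t))
            + multilinearExt f x' - multilinearExt f x)
        + (∑ o ∈ O, ℓ o * (1 - x o)) - 5 * ε * τ := by
  have hτs : ∀ s, f {s} ≤ τ := fun s => hτ ▸ le_sup' (fun s => f {s}) (mem_univ s)
  have hτ0 : 0 ≤ τ := (hf0 {Classical.arbitrary S}).trans (hτs _)
  have hn : (0 : ℝ) < Fintype.card S := Nat.cast_pos.2 Fintype.card_pos
  have hxI : x ∈ Set.Icc 0 1 := ⟨fun t => (hx t).1, fun t => (hx t).2⟩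
  have hzI : z ∈ Set.Icc 0 1 := ⟨fun t => (hz t).1, fun t => (hz t).2⟩
  have hstep := hf.multilinearExt_step_ge hf0 hτs hδ0.le hδ1 hxI hzI
  have hOpt := hf.multilinearExt_piecewise_le hxI ⟨zero_le_one, le_rfl⟩ hxI.2 O
  have hgrad : ∀ s, |multilinearExt (marginal f s) x - w s| ≤ 2 * ε * τ / Fintype.card S :=
    fun s => by rw [abs_sub_comm, ← multilinearExt_max_indVec_sub_min_indVec f hxI]; exact hw s
  have herr := neg_le_of_abs_le (abs_sum_mul_sub_sum_mul_sub_le hxI hzI O hgrad)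
  rw [mul_div_cancel₀ _ hn.ne'] at herr
  have hδn' : δ * (Fintype.card S : ℝ) ^ 2 ≤ ε := (le_div_iff₀ (by positivity)).1 hδn
  have hsplit : ∀ (T : Finset S) (a : S → ℝ), ∑ s ∈ T, a s * (c * w s + ℓ s)
      = c * ∑ s ∈ T, a s * w s + ∑ s ∈ T, ℓ s * a s := fun T a => by
    rw [mul_sum, ← sum_add_distrib]; exact sum_congr rfl fun s _ => by ring
  rw [hsplit, hsplit] at hO
  have hL : ∑ s, ℓ s * x' s = ∑ s, ℓ s * x s + δ * ∑ s, ℓ s * (z s * (1 - x s)) := by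
    rw [mul_sum, ← sum_add_distrib, hx']
    exact sum_congr rfl fun s _ => by ring
  subst hx'
  simp only [Pi.one_apply] at hOpt
  rw [max_indVec_eq_piecewise hxI, ge_iff_le, le_div_iff₀ hδ0, hL]
  have hετ : 0 ≤ ε * τ := mul_nonneg hε.le hτ0
  linarith [mul_le_mul_of_nonneg_left hstep hc0.le,
    mul_le_mul_of_nonneg_left hOpt (mul_nonneg hδ0.le hc0.le),
    mul_le_mul_of_nonneg_left hO hδ0.le,
    mul_le_mul_of_nonneg_left herr (mul_nonneg hδ0.le hc0.le),
    mul_le_mul_of_nonneg_left hδn' (mul_nonneg (mul_nonneg hc0.le hδ0.le) hτ0),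
    mul_le_mul_of_nonneg_left hc1 (mul_nonneg hδ0.le hετ), mul_nonneg hδ0.le hετ]
end
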